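/- Let m ≥ 2, n = 6m+1, and let G be the circulant graph on ℤ/nℤ with distances {m} ∪ [2m+1, 3m]. Then the set [−1, m−2] ∪ {m, 2m−1} (taken mod n) is an independent set of size m+2 in the graph G minus the edge {0, m}; for d ∈ [2m+1, 3m−1], the set {0, 2m, d} ∪ ([d−2m, d−m−1] \ {m}) is an independent set of size m+2 in G minus the edge {0, d}; and [−2m, −m−1] ∪ {0, 3m} is an independent set of size m+2 in G minus the edge {0, 3m}. -/
import Mathlib


/-- The cyclic distance ‖x‖ = min(x mod n, n − (x mod n)) for x ∈ ℤ/nℤ. -/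
def cyclicDist (n : ℕ) (x : ZMod n) : ℕ := min x.val (n - x.val)

/-- The circulant graph on `ZMod n` with distance set `S`: `x ~ y` iff `‖x - y‖ ∈ S`. -/
def circ (n : ℕ) (S : Set ℕ) : SimpleGraph (ZMod n) :=
  SimpleGraph.fromRel (fun x y => cyclicDist n (x - y) ∈ S)

/-- `G` is `R(s,t)`-good: no clique of size `s` and no independent set of size `t`. -/
def RGood {V : Type*} (s t : ℕ) (G : SimpleGraph V) : Prop :=
  G.CliqueFree s ∧ Gᶜ.CliqueFree t

/-- `G` is doubly saturated `R(s,t)`-good. -/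
def DoublySaturated {V : Type*} (s t : ℕ) (G : SimpleGraph V) : Prop :=
  RGood s t G ∧
  (∀ u v : V, u ≠ v → ¬ G.Adj u v → ¬ (G ⊔ SimpleGraph.edge u v).CliqueFree s) ∧
  (∀ u v : V, G.Adj u v → ¬ ((G.deleteEdges {s(u, v)})ᶜ.CliqueFree t)) ∧
  G ≠ ⊤ ∧ Gᶜ ≠ ⊤

lemma aux_castinj (n : ℕ) (i j : ℤ) (h : (i : ZMod n) = j) (hd : |i - j| < n) : i = j := by
  have h1 : i ≡ j [ZMOD n] := (ZMod.intCast_eq_intCast_iff _ _ _).mp h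
  have h2 : (n:ℤ) ∣ (j - i) := Int.ModEq.dvd h1
  have := Int.eq_zero_of_abs_lt_dvd h2 (by rw [abs_sub_comm] at hd; omega)
  omega

lemma aux_cyclicDist_neg (n : ℕ) [NeZero n] (x : ZMod n) : cyclicDist n (-x) = cyclicDist n x := by
  by_cases hx : x = 0
  · simp [hx]
  · haveI : NeZero x := ⟨hx⟩
    have hv : x.val ≤ n := le_of_lt (ZMod.val_lt x)
    unfold cyclicDist
    rw [ZMod.val_neg_of_ne_zero x, Nat.sub_sub_self hv, Nat.min_comm]

lemma aux_dist_small (m : ℕ) (e : ℕ) (he : e ≤ 3*m) :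
    cyclicDist (6*m+1) ((e : ZMod (6*m+1))) = e := by
  haveI : NeZero (6*m+1) := ⟨by omega⟩
  unfold cyclicDist
  rw [ZMod.val_natCast, Nat.mod_eq_of_lt (by omega)]
  omega

lemma aux_nonadj (m : ℕ) (a b : ZMod (6*m+1)) (e : ℕ)
    (he2 : e ≤ 2*m) (hem : e ≠ m)
    (h : a - b = ((e:ℕ) : ZMod (6*m+1)) ∨ b - a = ((e:ℕ) : ZMod (6*m+1))) :
    ¬ (circ (6*m+1) ({m} ∪ Set.Icc (2*m+1) (3*m))).Adj a b := by
  haveI : NeZero (6*m+1) := ⟨by omega⟩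
  rw [circ, SimpleGraph.fromRel_adj]
  have hd : cyclicDist (6*m+1) (a - b) = e := by
    rcases h with h | h
    · rw [h]; exact aux_dist_small m e (by omega)
    · have : a - b = -(b - a) := by ring
      rw [this, aux_cyclicDist_neg, h]; exact aux_dist_small m e (by omega)
  have hd2 : cyclicDist (6*m+1) (b - a) = e := by
    have : b - a = -(a - b) := by ring
    rw [this, aux_cyclicDist_neg, hd]
  rintro ⟨-, hS | hS⟩ <;> [rw [hd] at hS; rw [hd2] at hS] <;>
    simp only [Set.mem_union, Set.mem_singleton_iff, Set.mem_Icc] at hS <;> omega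

lemma aux_nonadj_int (m : ℕ) (z₁ z₂ : ℤ) (e : ℕ) (he2 : e ≤ 2*m) (hem : e ≠ m)
    (h : z₁ - z₂ = (e:ℤ) ∨ z₂ - z₁ = (e:ℤ) ∨ z₁ - z₂ = (e:ℤ) - (6*m+1) ∨
      z₂ - z₁ = (e:ℤ) - (6*m+1)) :
    ¬ (circ (6*m+1) ({m} ∪ Set.Icc (2*m+1) (3*m))).Adj (z₁ : ZMod (6*m+1)) (z₂ : ZMod (6*m+1)) := by
  have key : ∀ w₁ w₂ : ℤ, w₁ - w₂ = (e:ℤ) ∨ w₁ - w₂ = (e:ℤ) - (6*m+1) →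
      (w₁ : ZMod (6*m+1)) - (w₂ : ZMod (6*m+1)) = ((e:ℕ) : ZMod (6*m+1)) := by
    intro w₁ w₂ hw
    have : ((w₁ - w₂ : ℤ) : ZMod (6*m+1)) = ((e:ℕ) : ZMod (6*m+1)) := by
      rcases hw with hw | hw <;> rw [hw]
      · push_cast; ring
      · have h0 : ((6*(m:ℤ)+1 : ℤ) : ZMod (6*m+1)) = 0 := by
          exact_mod_cast ZMod.natCast_self (6*m+1)
        push_cast at h0 ⊢
        linear_combination -h0
    rw [← this]; push_cast; ring
  apply aux_nonadj m _ _ e he2 hem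
  rcases h with h | h | h | h
  · exact Or.inl (key _ _ (Or.inl h))
  · exact Or.inr (key _ _ (Or.inl h))
  · exact Or.inl (key _ _ (Or.inr h))
  · exact Or.inr (key _ _ (Or.inr h))

lemma aux_pair_ok {V : Type*} [DecidableEq V] (G : SimpleGraph V) (u v a b : V) (hab : a ≠ b)
    (h : ¬ G.Adj a b ∨ s(a,b) = s(u,v)) :
    ((G.deleteEdges {s(u,v)})ᶜ).Adj a b := by
  rw [SimpleGraph.compl_adj]
  refine ⟨hab, ?_⟩
  rw [SimpleGraph.deleteEdges_adj]
  rintro ⟨hG, hne⟩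
  rcases h with h | h
  · exact h hG
  · exact hne (by simp [h])

lemma aux_inj (m : ℕ) (z₁ z₂ : ℤ) (h1 : -(2*(m:ℤ)) ≤ z₁) (h2 : z₁ ≤ 3*m)
    (h3 : -(2*(m:ℤ)) ≤ z₂) (h4 : z₂ ≤ 3*m) (h : (z₁ : ZMod (6*m+1)) = z₂) : z₁ = z₂ := by
  refine aux_castinj (6*m+1) z₁ z₂ h ?_
  rw [abs_lt]
  constructor <;> push_cast <;> omega

lemma aux_injn (m : ℕ) (k₁ k₂ : ℕ) (h2 : k₁ ≤ 3*m) (h4 : k₂ ≤ 3*m)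
    (h : ((k₁:ℕ) : ZMod (6*m+1)) = ((k₂:ℕ) : ZMod (6*m+1))) : k₁ = k₂ := by
  have : ((k₁:ℤ) : ZMod (6*m+1)) = ((k₂:ℤ) : ZMod (6*m+1)) := by push_cast; exact_mod_cast h
  have := aux_inj m k₁ k₂ (by omega) (by omega) (by omega) (by omega) this
  exact_mod_cast this

theorem stmt_18 (m : ℕ) (hm : 2 ≤ m) (n : ℕ) (hn : n = 6 * m + 1) :
    -- removing the edge {0, m}
    (((fun i : ℤ => (i : ZMod n)) '' Set.Icc (-1 : ℤ) ((m : ℤ) - 2) ∪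
        {((m : ℕ) : ZMod n), ((2 * m - 1 : ℕ) : ZMod n)}).ncard = m + 2 ∧
      ((circ n ({m} ∪ Set.Icc (2 * m + 1) (3 * m))).deleteEdges
          {s((0 : ZMod n), ((m : ℕ) : ZMod n))})ᶜ.IsClique
        ((fun i : ℤ => (i : ZMod n)) '' Set.Icc (-1 : ℤ) ((m : ℤ) - 2) ∪
          {((m : ℕ) : ZMod n), ((2 * m - 1 : ℕ) : ZMod n)})) ∧
    -- removing an edge {0, d} with d ∈ [2m+1, 3m−1]
    (∀ d : ℕ, d ∈ Set.Icc (2 * m + 1) (3 * m - 1) →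
      (({(0 : ZMod n), ((2 * m : ℕ) : ZMod n), (d : ZMod n)} ∪
          (fun i : ℕ => (i : ZMod n)) '' (Set.Icc (d - 2 * m) (d - m - 1) \ {m})).ncard = m + 2 ∧
        ((circ n ({m} ∪ Set.Icc (2 * m + 1) (3 * m))).deleteEdges
            {s((0 : ZMod n), (d : ZMod n))})ᶜ.IsClique
          ({(0 : ZMod n), ((2 * m : ℕ) : ZMod n), (d : ZMod n)} ∪
            (fun i : ℕ => (i : ZMod n)) '' (Set.Icc (d - 2 * m) (d - m - 1) \ {m})))) ∧
    -- removing the edge {0, 3m}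
    (((fun i : ℤ => (i : ZMod n)) '' Set.Icc (-(2 * m) : ℤ) (-(m : ℤ) - 1) ∪
        {(0 : ZMod n), ((3 * m : ℕ) : ZMod n)}).ncard = m + 2 ∧
      ((circ n ({m} ∪ Set.Icc (2 * m + 1) (3 * m))).deleteEdges
          {s((0 : ZMod n), ((3 * m : ℕ) : ZMod n))})ᶜ.IsClique
        ((fun i : ℤ => (i : ZMod n)) '' Set.Icc (-(2 * m) : ℤ) (-(m : ℤ) - 1) ∪
          {(0 : ZMod n), ((3 * m : ℕ) : ZMod n)})) := by
  subst hn
  haveI : NeZero (6*m+1) := ⟨by omega⟩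
  have hc1 : ((m : ℕ) : ZMod (6*m+1)) = (((m:ℤ)) : ZMod (6*m+1)) := by push_cast; ring
  have hc2 : ((2*m - 1 : ℕ) : ZMod (6*m+1)) = (((2*(m:ℤ) - 1 : ℤ)) : ZMod (6*m+1)) := by
    push_cast [Nat.cast_sub (by omega : 1 ≤ 2*m)]; ring
  have hc3 : ((3*m : ℕ) : ZMod (6*m+1)) = (((3*(m:ℤ) : ℤ)) : ZMod (6*m+1)) := by
    push_cast; ring
  have hc0 : (0 : ZMod (6*m+1)) = (((0 : ℤ)) : ZMod (6*m+1)) := by norm_num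
  refine ⟨⟨?_, ?_⟩, ?_, ?_, ?_⟩
  · -- part 1 cardinality
    have hset : ((fun i : ℤ => (i : ZMod (6*m+1))) '' Set.Icc (-1 : ℤ) ((m : ℤ) - 2) ∪
          {((m : ℕ) : ZMod (6*m+1)), ((2 * m - 1 : ℕ) : ZMod (6*m+1))}) =
        (fun i : ℤ => (i : ZMod (6*m+1))) ''
          (Set.Icc (-1 : ℤ) ((m : ℤ) - 2) ∪ {(m:ℤ), 2*(m:ℤ)-1}) := by
      rw [Set.image_union, hc1, hc2]
      congr 1
      simp [Set.image_insert_eq]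
    have hinj : Set.InjOn (fun i : ℤ => (i : ZMod (6*m+1)))
        (Set.Icc (-1 : ℤ) ((m : ℤ) - 2) ∪ {(m:ℤ), 2*(m:ℤ)-1}) := by
      intro z₁ hz₁ z₂ hz₂ h
      simp only [Set.mem_union, Set.mem_Icc, Set.mem_insert_iff, Set.mem_singleton_iff] at hz₁ hz₂
      exact aux_inj m z₁ z₂ (by omega) (by omega) (by omega) (by omega) h
    have hdisj : Disjoint (Set.Icc (-1 : ℤ) ((m : ℤ) - 2)) ({(m:ℤ), 2*(m:ℤ)-1} : Set ℤ) := by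
      rw [Set.disjoint_left]
      rintro z hz (rfl | rfl) <;> simp only [Set.mem_Icc] at hz <;> omega
    have h1 : (Set.Icc (-1 : ℤ) ((m : ℤ) - 2)).ncard = m := by
      rw [Set.ncard_eq_toFinset_card', Set.toFinset_Icc, Int.card_Icc]
      omega
    have h2 : ({(m:ℤ), 2*(m:ℤ)-1} : Set ℤ).ncard = 2 := Set.ncard_pair (by omega)
    rw [hset, Set.ncard_image_of_injOn hinj, Set.ncard_union_eq hdisj, h1, h2]
  · -- part 1 clique
    intro a ha b hb hab
    have rep : ∀ x, x ∈ ((fun i : ℤ => (i : ZMod (6*m+1))) '' Set.Icc (-1 : ℤ) ((m : ℤ) - 2) ∪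
          {((m : ℕ) : ZMod (6*m+1)), ((2 * m - 1 : ℕ) : ZMod (6*m+1))}) →
        ∃ z : ℤ, ((-1 ≤ z ∧ z ≤ (m:ℤ) - 2) ∨ z = m ∨ z = 2*(m:ℤ)-1) ∧
          x = (z : ZMod (6*m+1)) := by
      rintro x (⟨i, hi, rfl⟩ | rfl | rfl)
      · exact ⟨i, Or.inl ⟨hi.1, hi.2⟩, rfl⟩
      · exact ⟨m, Or.inr (Or.inl rfl), hc1⟩
      · exact ⟨2*(m:ℤ)-1, Or.inr (Or.inr rfl), hc2⟩
    obtain ⟨z₁, hz₁, rfl⟩ := rep a ha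
    obtain ⟨z₂, hz₂, rfl⟩ := rep b hb
    have hzz : z₁ ≠ z₂ := fun h => hab (by rw [h])
    apply aux_pair_ok _ _ _ _ _ hab
    by_cases hcase : (z₁ = 0 ∧ z₂ = m) ∨ (z₁ = m ∧ z₂ = 0)
    · right
      rcases hcase with ⟨rfl, rfl⟩ | ⟨rfl, rfl⟩
      · rw [hc1, hc0]
      · rw [hc1, hc0, Sym2.eq_swap]
    · left
      apply aux_nonadj_int m z₁ z₂ (z₁ - z₂).natAbs (by omega) (by omega)
      omega
  · -- part 2
    intro d hd
    simp only [Set.mem_Icc] at hd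
    have hd1 : 2*m+1 ≤ d := hd.1
    have hd2 : d ≤ 3*m-1 := hd.2
    have hcd : ((d : ℕ) : ZMod (6*m+1)) = (((d:ℤ)) : ZMod (6*m+1)) := by push_cast; ring
    have hc2m : ((2*m : ℕ) : ZMod (6*m+1)) = (((2*(m:ℤ) : ℤ)) : ZMod (6*m+1)) := by
      push_cast; ring
    constructor
    · -- part 2 cardinality
      have hset : (({(0 : ZMod (6*m+1)), ((2 * m : ℕ) : ZMod (6*m+1)), (d : ZMod (6*m+1))} ∪
            (fun i : ℕ => (i : ZMod (6*m+1))) '' (Set.Icc (d - 2 * m) (d - m - 1) \ {m}))) =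
          (fun i : ℕ => (i : ZMod (6*m+1))) ''
            (({0, 2*m, d} : Set ℕ) ∪ (Set.Icc (d - 2 * m) (d - m - 1) \ {m})) := by
        rw [Set.image_union]
        congr 1
        simp [Set.image_insert_eq]
      have hinj : Set.InjOn (fun i : ℕ => (i : ZMod (6*m+1)))
          (({0, 2*m, d} : Set ℕ) ∪ (Set.Icc (d - 2 * m) (d - m - 1) \ {m})) := by
        intro k₁ hk₁ k₂ hk₂ h
        simp only [Set.mem_union, Set.mem_insert_iff, Set.mem_singleton_iff, Set.mem_diff,
          Set.mem_Icc] at hk₁ hk₂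
        exact aux_injn m k₁ k₂ (by omega) (by omega) h
      have hdisj : Disjoint ({0, 2*m, d} : Set ℕ) (Set.Icc (d - 2 * m) (d - m - 1) \ {m}) := by
        rw [Set.disjoint_left]
        rintro k (rfl | rfl | rfl) hk2 <;>
          simp only [Set.mem_diff, Set.mem_Icc, Set.mem_singleton_iff] at hk2 <;> omega
      have h1 : (({0, 2*m, d} : Set ℕ)).ncard = 3 := by
        rw [Set.ncard_insert_of_notMem (by simp; omega), Set.ncard_pair (by omega)]
      have h2 : (Set.Icc (d - 2 * m) (d - m - 1) \ ({m} : Set ℕ)).ncard = m - 1 := by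
        rw [Set.ncard_diff_singleton_of_mem (by simp only [Set.mem_Icc]; omega)]
        rw [Set.ncard_eq_toFinset_card', Set.toFinset_Icc, Nat.card_Icc]
        omega
      rw [hset, Set.ncard_image_of_injOn hinj, Set.ncard_union_eq hdisj, h1, h2]
      omega
    · -- part 2 clique
      intro a ha b hb hab
      have rep : ∀ x, x ∈ (({(0 : ZMod (6*m+1)), ((2 * m : ℕ) : ZMod (6*m+1)),
            (d : ZMod (6*m+1))} ∪
            (fun i : ℕ => (i : ZMod (6*m+1))) '' (Set.Icc (d - 2 * m) (d - m - 1) \ {m}))) →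
          ∃ z : ℤ, (z = 0 ∨ z = 2*(m:ℤ) ∨ z = (d:ℤ) ∨
              ((d:ℤ) - 2*m ≤ z ∧ z ≤ (d:ℤ) - m - 1 ∧ z ≠ (m:ℤ))) ∧
            x = (z : ZMod (6*m+1)) := by
        intro x hx
        simp only [Set.mem_union, Set.mem_insert_iff, Set.mem_singleton_iff,
          Set.mem_image] at hx
        rcases hx with (rfl | rfl | rfl) | ⟨i, hi, rfl⟩
        · exact ⟨0, Or.inl rfl, hc0⟩
        · exact ⟨2*(m:ℤ), Or.inr (Or.inl rfl), hc2m⟩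
        · exact ⟨(d:ℤ), Or.inr (Or.inr (Or.inl rfl)), hcd⟩
        · simp only [Set.mem_diff, Set.mem_Icc, Set.mem_singleton_iff] at hi
          exact ⟨(i:ℤ), Or.inr (Or.inr (Or.inr (by omega))), by push_cast; ring⟩
      obtain ⟨z₁, hz₁, rfl⟩ := rep a ha
      obtain ⟨z₂, hz₂, rfl⟩ := rep b hb
      have hzz : z₁ ≠ z₂ := fun h => hab (by rw [h])
      apply aux_pair_ok _ _ _ _ _ hab
      by_cases hcase : (z₁ = 0 ∧ z₂ = d) ∨ (z₁ = d ∧ z₂ = 0)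
      · right
        rcases hcase with ⟨rfl, rfl⟩ | ⟨rfl, rfl⟩
        · rw [hcd, hc0]
        · rw [hcd, hc0, Sym2.eq_swap]
      · left
        apply aux_nonadj_int m z₁ z₂ (z₁ - z₂).natAbs (by omega) (by omega)
        omega
  · -- part 3 cardinality
    have hset : ((fun i : ℤ => (i : ZMod (6*m+1))) '' Set.Icc (-(2 * m) : ℤ) (-(m : ℤ) - 1) ∪
          {(0 : ZMod (6*m+1)), ((3 * m : ℕ) : ZMod (6*m+1))}) =
        (fun i : ℤ => (i : ZMod (6*m+1))) ''
          (Set.Icc (-(2 * m) : ℤ) (-(m : ℤ) - 1) ∪ {(0:ℤ), 3*(m:ℤ)}) := by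
      rw [Set.image_union, hc0, hc3]
      congr 1
      simp [Set.image_insert_eq]
    have hinj : Set.InjOn (fun i : ℤ => (i : ZMod (6*m+1)))
        (Set.Icc (-(2 * m) : ℤ) (-(m : ℤ) - 1) ∪ {(0:ℤ), 3*(m:ℤ)}) := by
      intro z₁ hz₁ z₂ hz₂ h
      simp only [Set.mem_union, Set.mem_Icc, Set.mem_insert_iff, Set.mem_singleton_iff] at hz₁ hz₂
      exact aux_inj m z₁ z₂ (by omega) (by omega) (by omega) (by omega) h
    have hdisj : Disjoint (Set.Icc (-(2 * m) : ℤ) (-(m : ℤ) - 1)) ({(0:ℤ), 3*(m:ℤ)} : Set ℤ) := by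
      rw [Set.disjoint_left]
      rintro z hz (rfl | rfl) <;> simp only [Set.mem_Icc] at hz <;> omega
    have h1 : (Set.Icc (-(2 * m) : ℤ) (-(m : ℤ) - 1)).ncard = m := by
      rw [Set.ncard_eq_toFinset_card', Set.toFinset_Icc, Int.card_Icc]
      omega
    have h2 : ({(0:ℤ), 3*(m:ℤ)} : Set ℤ).ncard = 2 := Set.ncard_pair (by omega)
    rw [hset, Set.ncard_image_of_injOn hinj, Set.ncard_union_eq hdisj, h1, h2]
  · -- part 3 clique
    intro a ha b hb hab
    have rep : ∀ x, x ∈ ((fun i : ℤ => (i : ZMod (6*m+1))) ''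
          Set.Icc (-(2 * m) : ℤ) (-(m : ℤ) - 1) ∪
          {(0 : ZMod (6*m+1)), ((3 * m : ℕ) : ZMod (6*m+1))}) →
        ∃ z : ℤ, ((-(2*(m:ℤ)) ≤ z ∧ z ≤ -(m:ℤ) - 1) ∨ z = 0 ∨ z = 3*(m:ℤ)) ∧
          x = (z : ZMod (6*m+1)) := by
      rintro x (⟨i, hi, rfl⟩ | rfl | rfl)
      · exact ⟨i, Or.inl ⟨by exact_mod_cast hi.1, hi.2⟩, rfl⟩
      · exact ⟨0, Or.inr (Or.inl rfl), hc0⟩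
      · exact ⟨3*(m:ℤ), Or.inr (Or.inr rfl), hc3⟩
    obtain ⟨z₁, hz₁, rfl⟩ := rep a ha
    obtain ⟨z₂, hz₂, rfl⟩ := rep b hb
    have hzz : z₁ ≠ z₂ := fun h => hab (by rw [h])
    apply aux_pair_ok _ _ _ _ _ hab
    by_cases hcase : (z₁ = 0 ∧ z₂ = 3*(m:ℤ)) ∨ (z₁ = 3*(m:ℤ) ∧ z₂ = 0)
    · right
      rcases hcase with ⟨rfl, rfl⟩ | ⟨rfl, rfl⟩
      · rw [hc3, hc0]
      · rw [hc3, hc0, Sym2.eq_swap]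
    · left
      by_cases hbig : (z₁ - z₂).natAbs ≤ 2*m
      · apply aux_nonadj_int m z₁ z₂ (z₁ - z₂).natAbs (by omega) (by omega)
        omega
      · apply aux_nonadj_int m z₁ z₂ (6*m+1 - (z₁ - z₂).natAbs) (by omega) (by omega)
        omega
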